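/- arXiv:1108.6315 — 7 statements merged into one kernel-verified Lean document; each statement's English description precedes it below -/
import Mathlib

section
/- If C ⊆ 2^X has VC dimension d, then for every finite A ⊆ X, the number of distinct traces |{c ∩ A : c ∈ C}| is at most Φ_d(|A|) = ∑_{i=0}^{d} C(|A|, i). -/
open Set

def traceOn {X : Type*} (C : Set (Set X)) (A : Set X) : Set (Set X) :=
  {s | ∃ c ∈ C, s = c ∩ A}

def Shatters {X : Type*} (C : Set (Set X)) (A : Set X) : Prop :=
  ∀ s ⊆ A, ∃ c ∈ C, c ∩ A = s

def VCDimEq {X : Type*} (C : Set (Set X)) (d : ℕ) : Prop :=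
  (∃ A : Set X, A.Finite ∧ A.ncard = d ∧ Shatters C A) ∧
    ∀ A : Set X, A.Finite → Shatters C A → A.ncard ≤ d

def Phi (d n : ℕ) : ℕ := if d ≤ n then ∑ i ∈ Finset.range (d + 1), n.choose i else 2 ^ n

open scoped Finset

/-! The traces of `C` on a finite set `A` form a family `𝒜` of finsets of the subtype `A`. Every
set shattered by `𝒜` is shattered by `C`, so `𝒜` has VC dimension at most `d`, and the bound is
the Sauer–Shelah lemma for finite set families, `#𝒜 ≤ #𝒜.shatterer ≤ ∑ k ≤ vcDim 𝒜, (|A| choose k)`.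
The two branches of `Phi` agree, since `∑ i ≤ d, (n choose i) = 2 ^ n` once `n < d`. -/

theorem Phi_eq_sum_choose (d n : ℕ) : Phi d n = ∑ i ∈ Finset.range (d + 1), n.choose i := by
  unfold Phi
  split_ifs with hdn
  · rfl
  · rw [← Nat.sum_range_choose n]
    refine Finset.sum_subset (Finset.range_subset_range.2 (by omega)) fun i _ hi => ?_
    exact Nat.choose_eq_zero_of_lt (by simpa using hi)

theorem Finset.card_le_sum_choose_of_vcDim_le {α : Type*} [Fintype α] [DecidableEq α]
    {𝒜 : Finset (Finset α)} {d : ℕ} (h𝒜 : 𝒜.vcDim ≤ d) :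
    #𝒜 ≤ ∑ i ∈ Finset.range (d + 1), (Fintype.card α).choose i :=
  calc #𝒜 ≤ #𝒜.shatterer := 𝒜.card_le_card_shatterer
    _ ≤ ∑ i ∈ Finset.Iic 𝒜.vcDim, (Fintype.card α).choose i := Finset.card_shatterer_le_sum_vcDim
    _ ≤ ∑ i ∈ Finset.range (d + 1), (Fintype.card α).choose i := by
      rw [Nat.range_succ_eq_Iic]
      exact Finset.sum_le_sum_of_subset (Finset.Iic_subset_Iic.2 h𝒜)

section traceFinset

variable {X : Type*} (C : Set (Set X)) (A : Set X) [Fintype A]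

open Classical in
noncomputable def traceFinset : Finset (Finset A) :=
  {t | ∃ c ∈ C, (t : Set A) = Subtype.val ⁻¹' c}

variable {C A}

theorem mem_traceFinset {t : Finset A} :
    t ∈ traceFinset C A ↔ ∃ c ∈ C, (t : Set A) = Subtype.val ⁻¹' c := by
  classical
  simp [traceFinset]

theorem ncard_traceOn_le_card_traceFinset : (traceOn C A).ncard ≤ #(traceFinset C A) := by
  classical
  rw [← Set.ncard_coe_finset]
  refine Set.ncard_le_ncard_of_injOn (fun s => (Subtype.val ⁻¹' s : Set A).toFinset) ?_ ?_
  · rintro _ ⟨c, hc, rfl⟩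
    refine mem_traceFinset.2 ⟨c, hc, ?_⟩
    rw [Set.coe_toFinset, Set.preimage_inter, Subtype.coe_preimage_self, Set.inter_univ]
  · rintro _ ⟨c, -, rfl⟩ _ ⟨c', -, rfl⟩ h
    simpa [Subtype.preimage_coe_eq_preimage_coe_iff, Set.inter_comm] using h

theorem Shatters.of_shatters_traceFinset [DecidableEq A] {t : Finset A}
    (ht : (traceFinset C A).Shatters t) : Shatters C (Subtype.val '' (t : Set A)) := by
  classical
  intro s hs
  obtain ⟨u, hu, htu⟩ := ht (Finset.filter_subset (fun a : A => (a : X) ∈ s) t)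
  obtain ⟨c, hc, hcu⟩ := mem_traceFinset.1 hu
  refine ⟨c, hc, ?_⟩
  calc c ∩ Subtype.val '' (t : Set A) = Subtype.val '' ((t : Set A) ∩ Subtype.val ⁻¹' c) := by
        rw [Set.image_inter_preimage, Set.inter_comm]
    _ = Subtype.val '' ((t : Set A) ∩ Subtype.val ⁻¹' s) := by
        rw [← hcu, ← Finset.coe_inter, htu, Finset.coe_filter]; rfl
    _ = s := by rw [Set.image_inter_preimage, Set.inter_eq_right.2 hs]

theorem vcDim_traceFinset_le [DecidableEq A] {d : ℕ}
    (hC : ∀ B : Set X, B.Finite → Shatters C B → B.ncard ≤ d) : (traceFinset C A).vcDim ≤ d := by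
  refine Finset.sup_le fun t ht => ?_
  have hB := hC _ (Set.toFinite _) (Shatters.of_shatters_traceFinset (Finset.mem_shatterer.1 ht))
  rwa [Set.ncard_image_of_injective _ Subtype.val_injective, Set.ncard_coe_finset] at hB

end traceFinset

/-- Sauer's Lemma: if C has VC dimension d, then for every finite A,
the number of traces of C on A is at most Φ_d(|A|). -/
theorem sauer_lemma {X : Type*} (C : Set (Set X)) (d : ℕ) (hVC : VCDimEq C d)
    (A : Set X) (hA : A.Finite) : (traceOn C A).ncard ≤ Phi d A.ncard := by
  classical
  have := hA.fintype
  calc (traceOn C A).ncard ≤ #(traceFinset C A) := ncard_traceOn_le_card_traceFinset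
    _ ≤ ∑ i ∈ Finset.range (d + 1), (Fintype.card A).choose i :=
        Finset.card_le_sum_choose_of_vcDim_le (vcDim_traceFinset_le hVC.2)
    _ = Phi d A.ncard := by rw [Phi_eq_sum_choose, Set.ncard_eq_toFinset_card' A, Set.toFinset_card]
end

section
/- Let (X, <) be a linear order, B ⊆ X finite, d ∈ ω, and η ∈ 2^{d+1}. If c ⊆ B does not induce η on B, then there exists c' ⊆ X such that c' does not induce η on X and c' ∩ B = c. -/
open Set

def Induces {X : Type*} [LinearOrder X] {d : ℕ} (c : Set X) (η : Fin (d + 1) → Bool)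
    (B : Set X) : Prop :=
  ∃ b : Fin (d + 1) → X, StrictMono b ∧ (∀ i, b i ∈ B) ∧ ∀ i, b i ∈ c ↔ η i = true

/-- Auxiliary: `c` realizes the length-`k` prefix of `η'` within `B`, with all
witnesses strictly below `x`. -/
def PfxLT {X : Type*} [LinearOrder X] (B c : Set X) (η' : ℕ → Bool) (k : ℕ) (x : X) : Prop :=
  ∃ w : Fin k → X, StrictMono w ∧ (∀ j, w j ∈ B ∧ w j < x) ∧ ∀ j, (w j ∈ c ↔ η' j.val = true)

/-- Auxiliary: same with witnesses `≤ x`. -/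
def PfxLE {X : Type*} [LinearOrder X] (B c : Set X) (η' : ℕ → Bool) (k : ℕ) (x : X) : Prop :=
  ∃ w : Fin k → X, StrictMono w ∧ (∀ j, w j ∈ B ∧ w j ≤ x) ∧ ∀ j, (w j ∈ c ↔ η' j.val = true)

/-- Lemma: extending a trace on a finite set B avoiding η to a subset of X
avoiding η. -/
theorem extend_avoiding_eta {X : Type*} [LinearOrder X] (B : Set X) (hB : B.Finite)
    (d : ℕ) (η : Fin (d + 1) → Bool) (c : Set X) (hc : c ⊆ B)
    (h : ¬ Induces c η B) :
    ∃ c' : Set X, ¬ Induces c' η Set.univ ∧ c' ∩ B = c := by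
  classical
  set η' : ℕ → Bool := fun n => if hn : n < d + 1 then η ⟨n, hn⟩ else false with hη'
  have hP0 : ∀ x : X, PfxLT B c η' 0 x :=
    fun x => ⟨Fin.elim0, fun a => a.elim0, fun a => a.elim0, fun a => a.elim0⟩
  have hrestrict : ∀ {j k : ℕ}, j ≤ k → ∀ {x : X}, PfxLT B c η' k x → PfxLT B c η' j x := by
    intro j k hjk x hk
    obtain ⟨w, hmono, hBlt, hmatch⟩ := hk
    exact ⟨fun a => w ⟨a.val, lt_of_lt_of_le a.isLt hjk⟩,
      fun a b hab => hmono (Fin.mk_lt_mk.mpr hab),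
      fun a => hBlt _, fun a => hmatch _⟩
  have hPQ : ∀ {k : ℕ} {x : X}, PfxLT B c η' k x → PfxLE B c η' k x := by
    intro k x hk
    obtain ⟨w, h1, h2, h3⟩ := hk
    exact ⟨w, h1, fun j => ⟨(h2 j).1, (h2 j).2.le⟩, h3⟩
  have hQP : ∀ {k : ℕ} {x y : X}, x < y → PfxLE B c η' k x → PfxLT B c η' k y := by
    intro k x y hxy hk
    obtain ⟨w, h1, h2, h3⟩ := hk
    exact ⟨w, h1, fun j => ⟨(h2 j).1, lt_of_le_of_lt (h2 j).2 hxy⟩, h3⟩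
  set g : X → ℕ := fun x => Nat.findGreatest (fun k => PfxLT B c η' k x) d with hg
  set c' : Set X := c ∪ {x | x ∉ B ∧ η' (g x) = false} with hc'
  have hcap : c' ∩ B = c := by
    ext x
    simp only [hc', mem_inter_iff, mem_union, mem_setOf_eq]
    constructor
    · rintro ⟨hx | ⟨hnb, _⟩, hxB⟩
      · exact hx
      · exact absurd hxB hnb
    · exact fun hx => ⟨Or.inl hx, hc hx⟩
  refine ⟨c', ?_, hcap⟩
  rintro ⟨b, hbmono, -, hbmatch⟩
  have hstep : ∀ (i : ℕ) (hi : i < d + 1),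
      PfxLT B c η' i (b ⟨i, hi⟩) → PfxLE B c η' (i + 1) (b ⟨i, hi⟩) := by
    intro i hi hPi
    set x := b ⟨i, hi⟩ with hx
    have hval : η' i = η ⟨i, hi⟩ := by rw [hη']; exact dif_pos hi
    have hmatchx : x ∈ c' ↔ η' i = true := by
      rw [hval]; exact hbmatch ⟨i, hi⟩
    obtain ⟨w, hwmono, hwBlt, hwc⟩ := hPi
    by_cases hxB : x ∈ B
    · have hxc : x ∈ c ↔ η' i = true := by
        rw [← hmatchx, hc']
        simp only [mem_union, mem_setOf_eq]
        constructor
        · exact fun hx' => Or.inl hx'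
        · rintro (hx' | ⟨hnb, _⟩)
          · exact hx'
          · exact absurd hxB hnb
      refine ⟨fun j => if hj : j.val < i then w ⟨j.val, hj⟩ else x, ?_, ?_, ?_⟩
      · intro a b' hab
        by_cases hb' : b'.val < i
        · have ha : a.val < i := lt_trans hab hb'
          simp only [dif_pos hb', dif_pos ha]
          exact hwmono (show (⟨a.val, ha⟩ : Fin i) < ⟨b'.val, hb'⟩ from hab)
        · have ha' : a.val < b'.val := hab
          have hb'' : b'.val ≤ i := Nat.lt_succ_iff.mp b'.isLt
          have ha : a.val < i := by omega
          simp only [dif_neg hb', dif_pos ha]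
          exact (hwBlt ⟨a.val, ha⟩).2
      · intro j
        by_cases hj : j.val < i
        · simp only [dif_pos hj]
          exact ⟨(hwBlt _).1, (hwBlt _).2.le⟩
        · simp only [dif_neg hj]
          exact ⟨hxB, le_refl x⟩
      · intro j
        by_cases hj : j.val < i
        · simp only [dif_pos hj]; exact hwc _
        · have hji : j.val = i := by have := j.isLt; omega
          simp only [dif_neg hj]
          rw [hji]
          exact hxc
    · have hxc' : x ∈ c' ↔ η' (g x) = false := by
        rw [hc']
        simp only [mem_union, mem_setOf_eq]
        constructor
        · rintro (hx' | ⟨-, h2⟩)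
          · exact absurd (hc hx') hxB
          · exact h2
        · exact fun h2 => Or.inr ⟨hxB, h2⟩
      have hid : i ≤ d := Nat.lt_succ_iff.mp hi
      have hgi : i ≤ g x := Nat.le_findGreatest (P := fun k => PfxLT B c η' k x) hid ⟨w, hwmono, hwBlt, hwc⟩
      have hgne : g x ≠ i := by
        intro hgx
        rw [hgx] at hxc'
        have hbad : (η' i = true) ↔ (η' i = false) := hmatchx.symm.trans hxc'
        cases hbool : η' i <;> simp [hbool] at hbad
      have hgi1 : i + 1 ≤ g x := by omega
      have hPg : PfxLT B c η' (g x) x :=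
        Nat.findGreatest_spec (P := fun k => PfxLT B c η' k x) hid ⟨w, hwmono, hwBlt, hwc⟩
      exact hPQ (hrestrict hgi1 hPg)
  have key : ∀ (i : ℕ) (hi : i < d + 1), PfxLE B c η' (i + 1) (b ⟨i, hi⟩) := by
    intro i
    induction i with
    | zero => intro hi; exact hstep 0 hi (hP0 _)
    | succ n ihn =>
      intro hi
      have hn : n < d + 1 := by omega
      have hlt : b ⟨n, hn⟩ < b ⟨n + 1, hi⟩ := hbmono (by simp [Fin.lt_def])
      exact hstep (n + 1) hi (hQP hlt (ihn hn))
  obtain ⟨w, hwmono, hwB, hwc⟩ := key d (Nat.lt_succ_self d)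
  refine h ⟨w, hwmono, fun j => (hwB j).1, fun j => ?_⟩
  have hj := hwc j
  rwa [show η' j.val = η j from by simp only [hη']; rw [dif_pos j.isLt, Fin.eta]] at hj
end

section
/- Let (X, <) be a well-ordered set, B ⊆ X any subset (not necessarily finite), d ∈ ω, and η ∈ 2^{d+1}. If c ⊆ B does not induce η on B, then there exists c' ⊆ X not inducing η on X with c' ∩ B = c. -/
open Set

/-- `auxE` extends `η` to all of `ℕ` (value `false` beyond `d`). -/
def auxE (d : ℕ) (η : Fin (d + 1) → Bool) : ℕ → Bool :=
  fun n => if h : n < d + 1 then η ⟨n, h⟩ else false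

/-- `auxP B c d η j x` : there is a strictly increasing sequence of `j` points of `B`,
all `< x`, realizing the first `j` bits of `η` with respect to `c`. -/
def auxP {X : Type*} [LinearOrder X] (B c : Set X) (d : ℕ) (η : Fin (d + 1) → Bool)
    (j : ℕ) (x : X) : Prop :=
  ∃ b : Fin j → X, StrictMono b ∧
    ∀ i, b i ∈ B ∧ b i < x ∧ (b i ∈ c ↔ auxE d η i.val = true)

lemma auxP_zero {X : Type*} [LinearOrder X] (B c : Set X) (d : ℕ) (η : Fin (d + 1) → Bool)
    (x : X) : auxP B c d η 0 x :=
  ⟨Fin.elim0, fun a => a.elim0, fun i => i.elim0⟩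

open scoped Classical in
/-- `auxR B c d η x` : the largest `j ≤ d` such that `auxP B c d η j x` holds. -/
noncomputable def auxR {X : Type*} [LinearOrder X] (B c : Set X) (d : ℕ)
    (η : Fin (d + 1) → Bool) (x : X) : ℕ :=
  Nat.findGreatest (fun j => auxP B c d η j x) d

open scoped Classical in
lemma auxR_le {X : Type*} [LinearOrder X] (B c : Set X) (d : ℕ) (η : Fin (d + 1) → Bool)
    (x : X) : auxR B c d η x ≤ d :=
  Nat.findGreatest_le d

open scoped Classical in
lemma auxR_spec {X : Type*} [LinearOrder X] (B c : Set X) (d : ℕ) (η : Fin (d + 1) → Bool)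
    (x : X) : auxP B c d η (auxR B c d η x) x :=
  Nat.findGreatest_spec (P := fun j => auxP B c d η j x) (Nat.zero_le d) (auxP_zero B c d η x)

open scoped Classical in
lemma le_auxR {X : Type*} [LinearOrder X] (B c : Set X) (d : ℕ) (η : Fin (d + 1) → Bool)
    (x : X) {j : ℕ} (hj : j ≤ d) (hp : auxP B c d η j x) : j ≤ auxR B c d η x :=
  Nat.le_findGreatest hj hp

/-- Well-ordered variant: B may be infinite. -/
theorem extend_avoiding_eta_wellorder {X : Type*} [LinearOrder X] [WellFoundedLT X]
    (B : Set X) (d : ℕ) (η : Fin (d + 1) → Bool) (c : Set X) (hc : c ⊆ B)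
    (h : ¬ Induces c η B) :
    ∃ c' : Set X, ¬ Induces c' η Set.univ ∧ c' ∩ B = c := by
  classical
  set E := auxE d η with hE
  have hEeq : ∀ i : Fin (d + 1), E i.val = η i := by
    intro i
    simp [hE, auxE, i.isLt]
  set r := auxR B c d η with hrdef
  refine ⟨c ∪ {x | x ∉ B ∧ E (r x) = false}, ?_, ?_⟩
  · rintro ⟨x, hmono, -, hpat⟩
    have hmem : ∀ y : X, y ∉ B →
        (y ∈ c ∪ {x | x ∉ B ∧ E (r x) = false} ↔ E (r y) = false) := by
      intro y hy
      constructor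
      · rintro (hyc | hyd)
        · exact absurd (hc hyc) hy
        · exact hyd.2
      · intro hEy
        exact Or.inr ⟨hy, hEy⟩
    have hmemB : ∀ y : X, y ∈ B →
        (y ∈ c ∪ {x | x ∉ B ∧ E (r x) = false} ↔ y ∈ c) := by
      intro y hy
      constructor
      · rintro (hyc | hyd)
        · exact hyc
        · exact absurd hy hyd.1
      · intro hyc
        exact Or.inl hyc
    -- key step
    have key : ∀ i, ∀ hi : i < d + 1, auxP B c d η i (x ⟨i, hi⟩) →
        ∃ b : Fin (i + 1) → X, StrictMono b ∧
          (∀ j, b j ∈ B) ∧ (∀ j, b j ≤ x ⟨i, hi⟩) ∧ (∀ j, b j ∈ c ↔ E j.val = true) := by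
      intro i hi hPi
      set xi := x ⟨i, hi⟩ with hxi
      have hri : i ≤ r xi := le_auxR B c d η xi (by omega) hPi
      by_cases hxB : xi ∈ B
      · -- append xi to the previous witness
        have hxc : xi ∈ c ↔ E i = true := by
          have h1 := hpat ⟨i, hi⟩
          rw [← hxi] at h1
          rw [hmemB xi hxB] at h1
          rw [h1, hEeq ⟨i, hi⟩]
        obtain ⟨bp, hbp1, hbp2⟩ := hPi
        refine ⟨Fin.snoc bp xi, ?_, ?_, ?_, ?_⟩
        · intro a b hab
          rcases Fin.eq_castSucc_or_eq_last b with ⟨b', rfl⟩ | rfl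
          · rcases Fin.eq_castSucc_or_eq_last a with ⟨a', rfl⟩ | rfl
            · simp only [Fin.snoc_castSucc]
              exact hbp1 (Fin.castSucc_lt_castSucc_iff.mp hab)
            · exact absurd hab (not_lt.mpr (Fin.le_last _))
          · rcases Fin.eq_castSucc_or_eq_last a with ⟨a', rfl⟩ | rfl
            · simp only [Fin.snoc_castSucc, Fin.snoc_last]
              exact (hbp2 a').2.1
            · exact absurd hab (lt_irrefl _)
        · intro j
          rcases Fin.eq_castSucc_or_eq_last j with ⟨j', rfl⟩ | rfl
          · simp only [Fin.snoc_castSucc]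
            exact (hbp2 j').1
          · simp only [Fin.snoc_last]
            exact hxB
        · intro j
          rcases Fin.eq_castSucc_or_eq_last j with ⟨j', rfl⟩ | rfl
          · simp only [Fin.snoc_castSucc]
            exact le_of_lt (hbp2 j').2.1
          · simp only [Fin.snoc_last]
            exact le_refl _
        · intro j
          rcases Fin.eq_castSucc_or_eq_last j with ⟨j', rfl⟩ | rfl
          · simp only [Fin.snoc_castSucc]
            exact (hbp2 j').2.2
          · simp only [Fin.snoc_last]
            exact hxc
      · -- xi ∉ B : then r xi > i, truncate the r-witness
        have hri' : i + 1 ≤ r xi := by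
          rcases Nat.lt_or_ge i (r xi) with h' | h'
          · exact h'
          · exfalso
            have hreq : r xi = i := le_antisymm h' hri
            have h1 := hpat ⟨i, hi⟩
            rw [← hxi] at h1
            rw [hmem xi hxB] at h1
            rw [hreq, ← hEeq ⟨i, hi⟩] at h1
            rcases Bool.eq_false_or_eq_true (E i) with hb | hb <;> rw [hb] at h1 <;> simp at h1
        obtain ⟨bp, hbp1, hbp2⟩ := auxR_spec B c d η xi
        refine ⟨fun j => bp (Fin.castLE hri' j), ?_, ?_, ?_, ?_⟩
        · intro a b hab
          exact hbp1 (Fin.strictMono_castLE hri' hab)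
        · intro j
          exact (hbp2 _).1
        · intro j
          exact le_of_lt (hbp2 _).2.1
        · intro j
          exact (hbp2 _).2.2
    -- main induction
    have claim : ∀ i, ∀ hi : i < d + 1,
        ∃ b : Fin (i + 1) → X, StrictMono b ∧
          (∀ j, b j ∈ B) ∧ (∀ j, b j ≤ x ⟨i, hi⟩) ∧ (∀ j, b j ∈ c ↔ E j.val = true) := by
      intro i
      induction i with
      | zero => intro hi; exact key 0 hi (auxP_zero B c d η _)
      | succ n ih =>
        intro hi
        have hn : n < d + 1 := by omega
        obtain ⟨bp, hbp1, hbp2, hbp3, hbp4⟩ := ih hn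
        refine key (n + 1) hi ⟨bp, hbp1, ?_⟩
        intro j
        refine ⟨hbp2 j, lt_of_le_of_lt (hbp3 j) ?_, hbp4 j⟩
        exact hmono (show (⟨n, hn⟩ : Fin (d + 1)) < ⟨n + 1, hi⟩ from by
          simp [Fin.lt_def])
    obtain ⟨b, hb1, hb2, -, hb4⟩ := claim d (by omega)
    exact h ⟨b, hb1, hb2, fun j => by rw [← hEeq j]; exact hb4 j⟩
  · ext y
    constructor
    · rintro ⟨hy | ⟨hyB, -⟩, hyB2⟩
      · exact hy
      · exact absurd hyB2 hyB
    · intro hy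
      exact ⟨Or.inl hy, hc hy⟩
end

section
/- Let (X, <) be a well-order and suppose C ⊆ 2^X is characterized by η ∈ 2^{d+1}. Then for every subset X_0 ⊆ X (finite or infinite), the trace C(X_0) is characterized by η on X_0: C(X_0) = {c ⊆ X_0 : c does not induce η on X_0}. -/
open Set

/-- `η` extended to ℕ. -/
def etaN {d : ℕ} (η : Fin (d + 1) → Bool) (n : ℕ) : Bool :=
  if h : n < d + 1 then η ⟨n, h⟩ else false

lemma etaN_eq {d : ℕ} (η : Fin (d + 1) → Bool) {n : ℕ} (h : n < d + 1) :
    etaN η n = η ⟨n, h⟩ := dif_pos h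

/-- `c` induces the length-`k` prefix of `η` on `X₀` strictly below `x`. -/
def Good {X : Type*} [LinearOrder X] {d : ℕ} (η : Fin (d + 1) → Bool)
    (X₀ c : Set X) (k : ℕ) (x : X) : Prop :=
  ∃ b : ℕ → X, (∀ i j, i < j → j < k → b i < b j) ∧
    ∀ j < k, b j ∈ X₀ ∧ b j < x ∧ (b j ∈ c ↔ etaN η j = true)

lemma good_zero {X : Type*} [LinearOrder X] {d : ℕ} (η : Fin (d + 1) → Bool)
    (X₀ c : Set X) (x : X) : Good η X₀ c 0 x :=
  ⟨fun _ => x, fun _ _ _ h => by omega, fun _ h => by omega⟩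

lemma good_mono_k {X : Type*} [LinearOrder X] {d : ℕ} {η : Fin (d + 1) → Bool}
    {X₀ c : Set X} {k j : ℕ} {x : X} (h : Good η X₀ c k x) (hj : j ≤ k) :
    Good η X₀ c j x := by
  obtain ⟨b, hm, hp⟩ := h
  exact ⟨b, fun i i' hi hi' => hm i i' hi (by omega), fun i hi => hp i (by omega)⟩

lemma good_mono_x {X : Type*} [LinearOrder X] {d : ℕ} {η : Fin (d + 1) → Bool}
    {X₀ c : Set X} {k : ℕ} {x y : X} (h : Good η X₀ c k x) (hxy : x ≤ y) :
    Good η X₀ c k y := by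
  obtain ⟨b, hm, hp⟩ := h
  exact ⟨b, hm, fun i hi => ⟨(hp i hi).1, lt_of_lt_of_le (hp i hi).2.1 hxy, (hp i hi).2.2⟩⟩

lemma good_bound {X : Type*} [LinearOrder X] {d : ℕ} {η : Fin (d + 1) → Bool}
    {X₀ c : Set X} (hnind : ¬ Induces c η X₀) {k : ℕ} {x : X}
    (h : Good η X₀ c k x) : k ≤ d := by
  by_contra hk
  apply hnind
  obtain ⟨b, hm, hp⟩ := good_mono_k h (show d + 1 ≤ k by omega)
  refine ⟨fun i => b i.1, fun i j hij => hm i.1 j.1 hij j.2, fun i => (hp i.1 i.2).1, ?_⟩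
  intro i
  have := (hp i.1 i.2).2.2
  rwa [etaN_eq η i.2, Fin.eta] at this

/-- Greedy state function. -/
noncomputable def sFun {X : Type*} [LinearOrder X] {d : ℕ} (η : Fin (d + 1) → Bool)
    (X₀ c : Set X) (x : X) : ℕ :=
  sSup {k | Good η X₀ c k x}

section state

variable {X : Type*} [LinearOrder X] {d : ℕ} {η : Fin (d + 1) → Bool} {X₀ c : Set X}
  (hnind : ¬ Induces c η X₀)

include hnind

lemma sFun_good (x : X) : Good η X₀ c (sFun η X₀ c x) x := by
  have h1 : {k | Good η X₀ c k x}.Nonempty := ⟨0, good_zero η X₀ c x⟩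
  have h2 : BddAbove {k | Good η X₀ c k x} := ⟨d, fun k hk => good_bound hnind hk⟩
  exact Nat.sSup_mem h1 h2

lemma sFun_le (x : X) : sFun η X₀ c x ≤ d :=
  good_bound hnind (sFun_good hnind x)

lemma le_sFun {k : ℕ} {x : X} (h : Good η X₀ c k x) : k ≤ sFun η X₀ c x :=
  le_csSup ⟨d, fun j hj => good_bound hnind hj⟩ h

end state

lemma good_append {X : Type*} [LinearOrder X] {d : ℕ} {η : Fin (d + 1) → Bool}
    {X₀ c : Set X} {k : ℕ} {y x : X} (h : Good η X₀ c k y) (hy : y ∈ X₀)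
    (hval : y ∈ c ↔ etaN η k = true) (hyx : y < x) : Good η X₀ c (k + 1) x := by
  obtain ⟨b, hm, hp⟩ := h
  refine ⟨fun j => if j < k then b j else y, ?_, ?_⟩
  · intro i j hij hj
    by_cases hjk : j < k
    · simp only [if_pos hjk, if_pos (show i < k by omega)]
      exact hm i j hij hjk
    · have : j = k := by omega
      simp only [if_neg hjk, if_pos (show i < k by omega)]
      exact (hp i (by omega)).2.1
  · intro j hj
    by_cases hjk : j < k
    · simp only [if_pos hjk]
      exact ⟨(hp j hjk).1, lt_trans (hp j hjk).2.1 hyx, (hp j hjk).2.2⟩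
    · have : j = k := by omega
      subst this
      simp only [if_neg hjk]
      exact ⟨hy, hyx, hval⟩

lemma good_append_full {X : Type*} [LinearOrder X] {d : ℕ} {η : Fin (d + 1) → Bool}
    {X₀ c : Set X} {y : X} (h : Good η X₀ c d y) (hy : y ∈ X₀)
    (hval : y ∈ c ↔ etaN η d = true) : Induces c η X₀ := by
  obtain ⟨b, hm, hp⟩ := h
  refine ⟨fun i => if i.1 < d then b i.1 else y, ?_, ?_, ?_⟩
  · intro i j hij
    by_cases hjk : j.1 < d
    · simp only [if_pos hjk, if_pos (show i.1 < d by omega)]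
      exact hm i.1 j.1 hij hjk
    · have hij' : (i : ℕ) < j := hij
      have hid : i.1 < d := by omega
      simp only [if_neg hjk, if_pos hid]
      exact (hp i.1 hid).2.1
  · intro i
    by_cases hik : i.1 < d
    · simp only [if_pos hik]; exact (hp i.1 hik).1
    · simp only [if_neg hik]; exact hy
  · intro i
    by_cases hik : i.1 < d
    · simp only [if_pos hik]
      have := (hp i.1 hik).2.2
      rwa [etaN_eq η i.2, Fin.eta] at this
    · have : i.1 = d := by omega
      simp only [if_neg hik]
      rw [hval, etaN_eq η (show d < d + 1 by omega)]
      have : (⟨d, show d < d + 1 by omega⟩ : Fin (d + 1)) = i := by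
        apply Fin.ext; simp [this]
      rw [this]

/-- Key extension lemma: any `c ⊆ X₀` avoiding `η` on `X₀` extends to a subset of `X`
avoiding `η` on all of `X`. -/
lemma extension {X : Type*} [LinearOrder X] {d : ℕ} (η : Fin (d + 1) → Bool)
    (X₀ c : Set X) (hsub : c ⊆ X₀) (hnind : ¬ Induces c η X₀) :
    ∃ c' : Set X, ¬ Induces c' η Set.univ ∧ c = c' ∩ X₀ := by
  classical
  set c' : Set X := c ∪ {x | x ∉ X₀ ∧ etaN η (sFun η X₀ c x) = false} with hc'
  have hmemX₀ : ∀ x ∈ X₀, (x ∈ c' ↔ x ∈ c) := by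
    intro x hx
    simp only [hc', Set.mem_union, Set.mem_setOf_eq]
    constructor
    · rintro (h | h)
      · exact h
      · exact absurd hx h.1
    · exact Or.inl
  have hmemNot : ∀ x ∉ X₀, (x ∈ c' ↔ etaN η (sFun η X₀ c x) = false) := by
    intro x hx
    simp only [hc', Set.mem_union, Set.mem_setOf_eq]
    constructor
    · rintro (h | h)
      · exact absurd (hsub h) hx
      · exact h.2
    · exact fun h => Or.inr ⟨hx, h⟩
  refine ⟨c', ?_, ?_⟩
  · rintro ⟨b, hmono, -, hval⟩
    have claim : ∀ i : ℕ, ∀ hi : i ≤ d, Good η X₀ c i (b ⟨i, by omega⟩) := by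
      intro i
      induction i with
      | zero => exact fun _ => good_zero η X₀ c _
      | succ i ih =>
        intro hi
        have hgi : Good η X₀ c i (b ⟨i, by omega⟩) := ih (by omega)
        have hlt : b ⟨i, by omega⟩ < b ⟨i + 1, by omega⟩ :=
          hmono (by simp [Fin.lt_def])
        by_cases hx : b ⟨i, by omega⟩ ∈ X₀
        · refine good_append hgi hx ?_ hlt
          rw [← hmemX₀ _ hx, hval ⟨i, by omega⟩, etaN_eq η (by omega)]
        · have h1 : etaN η (sFun η X₀ c (b ⟨i, by omega⟩)) = false ↔
              η ⟨i, by omega⟩ = true := by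
            rw [← hmemNot _ hx, hval ⟨i, by omega⟩]
          have h2 : i ≤ sFun η X₀ c (b ⟨i, by omega⟩) := le_sFun hnind hgi
          rcases eq_or_lt_of_le h2 with heq | hlt'
          · rw [← heq, etaN_eq η (by omega)] at h1
            rcases Bool.eq_false_or_eq_true (η ⟨i, by omega⟩) with h | h <;>
              simp [h] at h1
          · have : Good η X₀ c (i + 1) (b ⟨i, by omega⟩) :=
              good_mono_k (sFun_good hnind _) hlt'
            exact good_mono_x this hlt.le
    have hgd : Good η X₀ c d (b ⟨d, by omega⟩) := claim d le_rfl
    by_cases hx : b ⟨d, by omega⟩ ∈ X₀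
    · refine hnind (good_append_full hgd hx ?_)
      rw [← hmemX₀ _ hx, hval ⟨d, by omega⟩, etaN_eq η (by omega)]
    · have h1 : etaN η (sFun η X₀ c (b ⟨d, by omega⟩)) = false ↔
          η ⟨d, by omega⟩ = true := by
        rw [← hmemNot _ hx, hval ⟨d, by omega⟩]
      have h2 : sFun η X₀ c (b ⟨d, by omega⟩) = d :=
        le_antisymm (sFun_le hnind _) (le_sFun hnind hgd)
      rw [h2, etaN_eq η (by omega)] at h1
      rcases Bool.eq_false_or_eq_true (η ⟨d, by omega⟩) with h | h <;> simp [h] at h1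
  · ext x
    constructor
    · intro hx
      exact ⟨Or.inl hx, hsub hx⟩
    · rintro ⟨hx, hx₀⟩
      exact (hmemX₀ x hx₀).1 hx

/-- On a well-order, a class characterized by η has all its traces characterized
by η, on arbitrary subsets. -/
theorem char_trace_wellorder {X : Type*} [LinearOrder X] [WellFoundedLT X] (d : ℕ)
    (η : Fin (d + 1) → Bool) (C : Set (Set X))
    (hchar : C = {c : Set X | ¬ Induces c η Set.univ}) :
    ∀ X₀ : Set X,
      traceOn C X₀ = {c : Set X | c ⊆ X₀ ∧ ¬ Induces c η X₀} := by
  intro X₀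
  subst hchar
  ext s
  constructor
  · rintro ⟨c, hcC, rfl⟩
    refine ⟨Set.inter_subset_right, ?_⟩
    rintro ⟨b, hmono, hmem, hval⟩
    refine hcC ⟨b, hmono, fun i => Set.mem_univ _, fun i => ?_⟩
    constructor
    · intro h
      exact (hval i).1 ⟨h, hmem i⟩
    · intro h
      exact ((hval i).2 h).1
  · rintro ⟨hsub, hnind⟩
    obtain ⟨c', hc', heq⟩ := extension η X₀ s hsub hnind
    exact ⟨c', hc', heq⟩
end

section
/- Let (X, <) be a linear order and C ⊆ 2^X a family finitely characterized by some η ∈ 2^{d+1}. Then every c in C has alternation number at most 2(d+1) − 1 in X; equivalently, any subset of X with alternation number at least 2(d+1) induces every bit string in 2^{d+1}, hence lies outside C. -/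
open Set

def AltSeq {X : Type*} [LinearOrder X] (c : Set X) (n : ℕ) : Prop :=
  ∃ x : Fin n → X, StrictMono x ∧
    ∀ i : ℕ, ∀ h : i + 1 < n, (x ⟨i, Nat.lt_of_succ_lt h⟩ ∈ c ↔ x ⟨i + 1, h⟩ ∉ c)

/-- Members of a finitely characterized family have alternation number at most
2(d+1) - 1: no member admits an alternating sequence of length 2(d+1). -/
theorem finChar_alternation {X : Type*} [LinearOrder X] (d : ℕ)
    (η : Fin (d + 1) → Bool) (C : Set (Set X))
    (hfc : ∀ B : Set X, B.Finite →
      traceOn C B = {c : Set X | c ⊆ B ∧ ¬ Induces c η B}) :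
    ∀ c ∈ C, ¬ AltSeq c (2 * (d + 1)) := by
  classical
  rintro c hc ⟨x, hmono, halt⟩
  set B : Set X := Set.range x with hB
  have hBfin : B.Finite := Set.finite_range x
  have htr : c ∩ B ∈ traceOn C B := ⟨c, hc, rfl⟩
  rw [hfc B hBfin] at htr
  apply htr.2
  have hlt0 : ∀ i : Fin (d + 1), 2 * (i : ℕ) < 2 * (d + 1) := fun i => by
    have := i.isLt; omega
  have hlt1 : ∀ i : Fin (d + 1), 2 * (i : ℕ) + 1 < 2 * (d + 1) := fun i => by
    have := i.isLt; omega
  refine ⟨fun i => if x ⟨2 * i, hlt0 i⟩ ∈ c ↔ η i = true then x ⟨2 * i, hlt0 i⟩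
      else x ⟨2 * i + 1, hlt1 i⟩, ?_, ?_, ?_⟩
  · intro i j hij
    have h1 : (if x ⟨2 * i, hlt0 i⟩ ∈ c ↔ η i = true then x ⟨2 * i, hlt0 i⟩
        else x ⟨2 * i + 1, hlt1 i⟩) ≤ x ⟨2 * (i : ℕ) + 1, hlt1 i⟩ := by
      split
      · exact le_of_lt (hmono (by simp [Fin.lt_def]))
      · exact le_rfl
    have h2 : x ⟨2 * (j : ℕ), hlt0 j⟩ ≤ (if x ⟨2 * j, hlt0 j⟩ ∈ c ↔ η j = true
        then x ⟨2 * j, hlt0 j⟩ else x ⟨2 * j + 1, hlt1 j⟩) := by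
      split
      · exact le_rfl
      · exact le_of_lt (hmono (by simp [Fin.lt_def]))
    have hij' : (i : ℕ) < j := hij
    have h3 : x ⟨2 * (i : ℕ) + 1, hlt1 i⟩ < x ⟨2 * (j : ℕ), hlt0 j⟩ :=
      hmono (by simp [Fin.lt_def]; omega)
    exact lt_of_le_of_lt h1 (lt_of_lt_of_le h3 h2)
  · intro i
    dsimp only
    split <;> exact ⟨_, rfl⟩
  · intro i
    have ha := halt (2 * (i : ℕ)) (hlt1 i)
    constructor
    · intro hm
      by_contra hne
      dsimp only at hm
      split at hm
      · rename_i h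
        exact hne (h.mp hm.1)
      · rename_i h
        have hx1 : x ⟨2 * (i : ℕ) + 1, hlt1 i⟩ ∈ c := hm.1
        have : x ⟨2 * (i : ℕ), hlt0 i⟩ ∉ c := by
          intro hx0; exact (ha.mp hx0) hx1
        cases hη : η i with
        | true => exact hne hη
        | false => exact h (by simp [hη, this])
    · intro hη
      dsimp only
      split
      · rename_i h
        exact ⟨h.mpr hη, ⟨_, rfl⟩⟩
      · rename_i h
        have hx0 : x ⟨2 * (i : ℕ), hlt0 i⟩ ∉ c := fun hx0 => h (by simp [hx0, hη])
        have hx1 : x ⟨2 * (i : ℕ) + 1, hlt1 i⟩ ∈ c := by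
          by_contra hx1
          exact hx0 (ha.mpr hx1)
        exact ⟨hx1, ⟨_, rfl⟩⟩
end

section
/- For every d ∈ ω and every bit string η ∈ 2^{d+1}, there exists a quantifier-free formula ψ(x; y_1,...,y_d) in the language {<} such that the family C^o_ψ = {ψ(ℚ; a_1,...,a_d) : a_1 < ... < a_d in ℚ} of sets defined by ψ with increasing parameters is finitely characterized by η. -/
open Set

/-- Terms of the language {<} with one object variable `x` and `n` parameter
variables `y i`. -/
inductive Trm (n : ℕ) : Type
  | x : Trm n
  | y : Fin n → Trm n

/-- Quantifier-free formulas of the language {<} (with equality), partitioned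
with single object variable `x` and parameter variables `y 1, ..., y n`. -/
inductive QF (n : ℕ) : Type
  | lt : Trm n → Trm n → QF n
  | eq : Trm n → Trm n → QF n
  | not : QF n → QF n
  | and : QF n → QF n → QF n
  | or : QF n → QF n → QF n

def Trm.eval {n : ℕ} (a : ℚ) (p : Fin n → ℚ) : Trm n → ℚ
  | .x => a
  | .y i => p i

/-- Satisfaction in (ℚ, <) with object value `a` and parameters `p`. -/
def QF.Sat {n : ℕ} (a : ℚ) (p : Fin n → ℚ) : QF n → Prop
  | .lt t₁ t₂ => t₁.eval a p < t₂.eval a p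
  | .eq t₁ t₂ => t₁.eval a p = t₂.eval a p
  | .not φ => ¬ φ.Sat a p
  | .and φ ψ => φ.Sat a p ∧ ψ.Sat a p
  | .or φ ψ => φ.Sat a p ∨ ψ.Sat a p

/-- The family of subsets of ℚ defined by φ with strictly increasing
parameters. -/
def defFam {n : ℕ} (φ : QF n) : Set (Set ℚ) :=
  {s | ∃ p : Fin n → ℚ, StrictMono p ∧ s = {a : ℚ | φ.Sat a p}}

/-!
With parameters `p₀ < ⋯ < p_{d-1}`, the formula `avoidingFormula η` puts the parameter `pⱼ` into
the defined set iff `η j = true`, and a point of the open interval `(p_{j-1}, pⱼ)` (where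
`p_{-1} = -∞`, `p_d = +∞`) iff `η j = false`. So the `i`-th point of an increasing sequence
labelled by `η` lies at or beyond `pᵢ`, which is impossible for `i = d`.
Conversely, for a finite `B` and a set `s` not inducing `η` on `B`, the first parameter is
placed at the least point of `B` whose label in `s` is `η 0` (if there is none, all
parameters go above `B`); the points of `B` below it all carry the label `¬ η 0`, and the
points above it do not induce `Fin.tail η`, so that the remaining parameters are found by
induction on `d`.
-/

section Rename

variable {n m : ℕ}

def Trm.rename (f : Fin n → Fin m) : Trm n → Trm m
  | .x => .x
  | .y i => .y (f i)

def QF.rename (f : Fin n → Fin m) : QF n → QF m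
  | .lt t₁ t₂ => .lt (t₁.rename f) (t₂.rename f)
  | .eq t₁ t₂ => .eq (t₁.rename f) (t₂.rename f)
  | .not φ => .not (φ.rename f)
  | .and φ ψ => .and (φ.rename f) (ψ.rename f)
  | .or φ ψ => .or (φ.rename f) (ψ.rename f)

@[simp]
theorem Trm.eval_rename (f : Fin n → Fin m) (t : Trm n) (a : ℚ) (p : Fin m → ℚ) :
    (t.rename f).eval a p = t.eval a (p ∘ f) := by
  cases t <;> rfl

@[simp]
theorem QF.sat_rename (f : Fin n → Fin m) (φ : QF n) (a : ℚ) (p : Fin m → ℚ) :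
    (φ.rename f).Sat a p ↔ φ.Sat a (p ∘ f) := by
  induction φ <;> simp_all [QF.rename, QF.Sat]

end Rename

def avoidingFormula : {d : ℕ} → (Fin (d + 1) → Bool) → QF d
  | 0, η => if η 0 then .lt .x .x else .eq .x .x
  | _ + 1, η =>
    .or (if η 0 then .eq .x (.y 0) else .lt .x (.y 0))
      (.and (.lt (.y 0) .x) ((avoidingFormula (Fin.tail η)).rename Fin.succ))

theorem sat_avoidingFormula_of_forall_lt {d : ℕ} (η : Fin (d + 1) → Bool) {a : ℚ}
    {p : Fin d → ℚ} (h : ∀ k, a < p k) : (avoidingFormula η).Sat a p ↔ η 0 = false := by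
  cases d with
  | zero => cases hη : η 0 <;> simp [avoidingFormula, QF.Sat, Trm.eval, hη]
  | succ d =>
    have h0 := h 0
    cases hη : η 0 <;> simp [avoidingFormula, QF.Sat, Trm.eval, hη, h0, h0.ne, h0.not_gt]

theorem sat_avoidingFormula_param_zero {d : ℕ} (η : Fin (d + 2) → Bool) (p : Fin (d + 1) → ℚ) :
    (avoidingFormula η).Sat (p 0) p ↔ η 0 = true := by
  cases hη : η 0 <;> simp [avoidingFormula, QF.Sat, Trm.eval, hη]

theorem sat_avoidingFormula_of_lt {d : ℕ} (η : Fin (d + 2) → Bool) {a : ℚ}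
    {p : Fin (d + 1) → ℚ} (h : p 0 < a) :
    (avoidingFormula η).Sat a p ↔ (avoidingFormula (Fin.tail η)).Sat a (Fin.tail p) := by
  cases hη : η 0 <;> simp [avoidingFormula, QF.Sat, Trm.eval, hη, h, h.ne', h.not_gt] <;> rfl

theorem induces_inter_self_iff {X : Type*} [LinearOrder X] {d : ℕ} {c B : Set X}
    {η : Fin (d + 1) → Bool} : Induces (c ∩ B) η B ↔ Induces c η B := by
  refine exists_congr fun b => and_congr_right fun _ => and_congr_right fun hbB => ?_
  simp only [mem_inter_iff, hbB, and_true]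

theorem Induces.of_tail {X : Type*} [LinearOrder X] {d : ℕ} {c B : Set X}
    {η : Fin (d + 2) → Bool} {x : X} (hxB : x ∈ B) (hxc : x ∈ c ↔ η 0 = true)
    (h : Induces c (Fin.tail η) (B ∩ Ioi x)) : Induces c η B := by
  obtain ⟨b, hb, hbB, hbc⟩ := h
  refine ⟨Fin.cons x b, Fin.strictMono_cons.2 ⟨fun i => (hbB i).2, hb⟩, ?_, ?_⟩
  · exact Fin.cases hxB fun i => (hbB i).1
  · exact Fin.cases hxc hbc

theorem exists_strictMono_forall_lt {K : Type*} [Field K] [LinearOrder K]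
    [IsStrictOrderedRing K] {B : Set K} (hB : B.Finite) (d : ℕ) :
    ∃ p : Fin d → K, StrictMono p ∧ ∀ k, ∀ b ∈ B, b < p k := by
  obtain ⟨M, hM⟩ := hB.bddAbove
  refine ⟨fun k => M + 1 + k, fun i j hij => by simpa using hij, fun k b hb => ?_⟩
  have : (0 : K) ≤ k := Nat.cast_nonneg _
  linarith [hM hb]

theorem exists_param_le_of_sat_iff {d : ℕ} (η : Fin (d + 1) → Bool) {p : Fin d → ℚ} {a : ℚ}
    (ha : (avoidingFormula η).Sat a p ↔ η 0 = true) : ∃ k, p k ≤ a := by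
  by_contra! h
  rw [sat_avoidingFormula_of_forall_lt η h] at ha
  cases η 0 <;> simp at ha

theorem not_induces_avoidingFormula {d : ℕ} (η : Fin (d + 1) → Bool) {p : Fin d → ℚ}
    (hp : StrictMono p) (B : Set ℚ) : ¬ Induces {a | (avoidingFormula η).Sat a p} η B := by
  induction d with
  | zero =>
    rintro ⟨b, -, -, hbη⟩
    obtain ⟨k, -⟩ := exists_param_le_of_sat_iff η (hbη 0)
    exact k.elim0
  | succ d ih =>
    rintro ⟨b, hb, hbB, hbη⟩
    obtain ⟨k, hk⟩ := exists_param_le_of_sat_iff η (hbη 0)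
    have hp0 (i : Fin (d + 1)) : p 0 < b i.succ :=
      ((hp.monotone k.zero_le).trans hk).trans_lt (hb i.succ_pos)
    refine ih (Fin.tail η) (hp.comp Fin.strictMono_succ)
      ⟨Fin.tail b, hb.comp Fin.strictMono_succ, fun i => hbB i.succ, fun i => ?_⟩
    exact (sat_avoidingFormula_of_lt η (hp0 i)).symm.trans (hbη i.succ)

theorem Set.Finite.forall_not_or_exists_least {X : Type*} [LinearOrder X] {B : Set X}
    (hB : B.Finite) (P : X → Prop) :
    (∀ b ∈ B, ¬ P b) ∨ ∃ x ∈ B, P x ∧ ∀ b ∈ B, b < x → ¬ P b := by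
  rcases {b ∈ B | P b}.eq_empty_or_nonempty with h | h
  · exact Or.inl fun b hb hPb => h.subset ⟨hb, hPb⟩
  · obtain ⟨x, ⟨hxB, hPx⟩, hmin⟩ := exists_min_image _ id (hB.subset (sep_subset _ _)) h
    exact Or.inr ⟨x, hxB, hPx, fun b hb hbx hPb => (hmin b ⟨hb, hPb⟩).not_gt hbx⟩

theorem sat_avoidingFormula_iff_mem_of_forall_lt {d : ℕ} (η : Fin (d + 1) → Bool) {p : Fin d → ℚ}
    {s : Set ℚ} {b : ℚ} (hbp : ∀ k, b < p k) (hbs : ¬ (b ∈ s ↔ η 0 = true)) :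
    (avoidingFormula η).Sat b p ↔ b ∈ s := by
  rw [sat_avoidingFormula_of_forall_lt η hbp]
  grind

theorem exists_params_avoidingFormula_of_forall_not {d : ℕ} (η : Fin (d + 1) → Bool)
    {B s : Set ℚ} (hB : B.Finite) (L : ℚ)
    (hlow : ∀ b ∈ B, ¬ (b ∈ s ↔ η 0 = true)) :
    ∃ p : Fin d → ℚ, StrictMono p ∧ (∀ k, L < p k) ∧
      ∀ b ∈ B, ((avoidingFormula η).Sat b p ↔ b ∈ s) := by
  obtain ⟨p, hp, hpB⟩ := exists_strictMono_forall_lt (hB.insert L) d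
  exact ⟨p, hp, fun k => hpB k L (mem_insert _ _), fun b hb =>
    sat_avoidingFormula_iff_mem_of_forall_lt η (fun k => hpB k b (mem_insert_of_mem _ hb))
      (hlow b hb)⟩

theorem exists_params_avoidingFormula {d : ℕ} (η : Fin (d + 1) → Bool) {B s : Set ℚ}
    (hB : B.Finite) (hs : ¬ Induces s η B) {L : ℚ} (hL : B ⊆ Ioi L) :
    ∃ p : Fin d → ℚ, StrictMono p ∧ (∀ k, L < p k) ∧
      ∀ b ∈ B, ((avoidingFormula η).Sat b p ↔ b ∈ s) := by
  induction d generalizing B s L with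
  | zero =>
    rcases hB.forall_not_or_exists_least (fun b => b ∈ s ↔ η 0 = true) with
      hlow | ⟨x, hxB, hxs, -⟩
    · exact exists_params_avoidingFormula_of_forall_not η hB L hlow
    · exact absurd ⟨fun _ => x, Fin.strictMono_iff_lt_succ.2 finZeroElim, fun _ => hxB,
        Fin.forall_fin_one.2 hxs⟩ hs
  | succ d ih =>
    rcases hB.forall_not_or_exists_least (fun b => b ∈ s ↔ η 0 = true) with
      hlow | ⟨x, hxB, hxs, hxmin⟩
    · exact exists_params_avoidingFormula_of_forall_not η hB L hlow
    have hs' : ¬ Induces s (Fin.tail η) (B ∩ Ioi x) := fun h => hs (h.of_tail hxB hxs)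
    obtain ⟨p', hp', hp'x, hp'B⟩ :=
      ih (Fin.tail η) (hB.subset inter_subset_left) hs' inter_subset_right
    refine ⟨Fin.cons x p', Fin.strictMono_cons.2 ⟨hp'x, hp'⟩,
      Fin.cases (hL hxB) fun k => (hL hxB).trans (hp'x k), fun b hb => ?_⟩
    rcases lt_trichotomy b x with hbx | rfl | hxb
    · exact sat_avoidingFormula_iff_mem_of_forall_lt η
        (Fin.cases hbx fun k => hbx.trans (hp'x k)) (hxmin b hb hbx)
    · exact (sat_avoidingFormula_param_zero η (Fin.cons b p')).trans hxs.symm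
    · exact (sat_avoidingFormula_of_lt η (p := Fin.cons x p') hxb).trans (hp'B b ⟨hb, hxb⟩)

/-- For every forbidden label η ∈ 2^{d+1} there is a quantifier-free order
formula ψ(x; y₁,...,y_d) whose family of increasing-parameter definable sets
is finitely characterized by η. -/
theorem exists_formula_finChar (d : ℕ) (η : Fin (d + 1) → Bool) :
    ∃ ψ : QF d, ∀ B : Set ℚ, B.Finite →
      traceOn (defFam ψ) B = {c : Set ℚ | c ⊆ B ∧ ¬ Induces c η B} := by
  refine ⟨avoidingFormula η, fun B hB => Set.ext fun s => ⟨?_, ?_⟩⟩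
  · rintro ⟨_, ⟨p, hp, rfl⟩, rfl⟩
    exact ⟨inter_subset_right,
      induces_inter_self_iff.not.2 (not_induces_avoidingFormula η hp B)⟩
  · rintro ⟨hsB, hs⟩
    obtain ⟨L, hL⟩ := hB.bddBelow
    obtain ⟨p, hp, -, hpB⟩ :=
      exists_params_avoidingFormula η hB hs fun b hb => (sub_one_lt L).trans_le (hL hb)
    refine ⟨_, ⟨p, hp, rfl⟩, Set.ext fun b => ?_⟩
    exact ⟨fun hb => ⟨(hpB b (hsB hb)).2 hb, hsB hb⟩, fun ⟨hsat, hb⟩ => (hpB b hb).1 hsat⟩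
end

section
/- For every quantifier-free formula φ(x; y_1,...,y_n) in the language {<} (partitioned with single object variable x), the family C^o_φ = {φ(ℚ; a_1,...,a_n) : a_1 < ... < a_n in ℚ} is finitely characterized by some forbidden label η ∈ 2^{d+1} for some d ∈ ω. -/
/-!
Strictly increasing parameters `p 0 < ⋯ < p (n - 1)` cut `ℚ` into `2 n + 1` cells, alternately
open intervals and single points, and a quantifier-free `φ(x; p)` has on cell `k` a truth value
`f k` that does not depend on `p`. The cells of the points of a finite `B` form a weakly increasing
sequence in which each point cell occurs at most once, and every such sequence is realized by
some `p`, as `ℚ` is dense without endpoints. So the traces on `B` are the labellings of `B`, read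
in increasing order, that match the pattern `f 0* (f 1)? f 2* ⋯ f (2 n)*`, and these are exactly
the words avoiding one fixed word `η` as a subsequence.
-/

open Set

open Finset
open scoped List

theorem compare_eq_compare_of_iff {α β : Type*} [LinearOrder α] [LinearOrder β] {a b : α}
    {c d : β} (hlt : a < b ↔ c < d) (heq : a = b ↔ c = d) : compare a b = compare c d := by
  rcases lt_trichotomy a b with h | h | h
  · rw [compare_lt_iff_lt.2 h, compare_lt_iff_lt.2 (hlt.1 h)]
  · rw [compare_eq_iff_eq.2 h, compare_eq_iff_eq.2 (heq.1 h)]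
  · rw [compare_gt_iff_gt.2 h, compare_gt_iff_gt.2 <|
      lt_of_le_of_ne (not_lt.1 (mt hlt.2 h.not_gt)) (Ne.symm (mt heq.2 h.ne'))]

theorem Nat.eq_of_forall_compare_two_mul_add_one {n k l : ℕ} (hk : k ≤ 2 * n) (hl : l ≤ 2 * n)
    (h : ∀ i < n, compare k (2 * i + 1) = compare l (2 * i + 1)) : k = l := by
  by_contra hne
  wlog hkl : k < l generalizing k l
  · exact this hl hk (fun i hi => (h i hi).symm) (Ne.symm hne) (by omega)
  obtain ⟨j, hj | hj⟩ := Nat.even_or_odd' k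
  · have := h j (by omega)
    rw [compare_lt_iff_lt.2 (by omega), eq_comm, compare_lt_iff_lt] at this
    omega
  · have := h j (by omega)
    rw [compare_eq_iff_eq.2 hj, compare_gt_iff_gt.2 (by omega)] at this
    exact absurd this (by decide)

theorem List.Nodup.exists_map_eq {α β : Type*} [DecidableEq α] [Inhabited β] {L : List α}
    {Q : List β} (hL : L.Nodup) (hlen : L.length = Q.length) : ∃ g : α → β, L.map g = Q :=
  ⟨fun a => Q.getD (L.idxOf a) default, List.ext_getElem (by simp [hlen]) fun i _ h => by
    simp [hL.idxOf_getElem, List.getElem?_eq_getElem h]⟩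

theorem List.SortedLT.rel_of_lt {X : Type*} [Preorder X] {L : List X} (hL : L.SortedLT)
    {R : X → X → Prop} (hR : L.Pairwise R) {a b : X} (ha : a ∈ L) (hb : b ∈ L) (hab : a < b) :
    R a b := by
  obtain ⟨i, hi, rfl⟩ := List.mem_iff_getElem.1 ha
  obtain ⟨j, hj, rfl⟩ := List.mem_iff_getElem.1 hb
  exact List.pairwise_iff_getElem.1 hR i j hi hj (hL.strictMono_get.lt_iff_lt.1 hab)

theorem List.exists_eq_map_add_two {Q : List ℕ} (h : ∀ k ∈ Q, 2 ≤ k) :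
    ∃ Q' : List ℕ, Q = Q'.map (· + 2) :=
  ⟨Q.map (· - 2), by
    rw [List.map_map]
    conv_lhs => rw [← List.map_id Q]
    exact List.map_congr_left fun k hk => by have := h k hk; simp; omega⟩

section Cells

variable {X : Type*} [LinearOrder X] {n : ℕ}

/-- The index of the cell of `a` in the partition `(-∞, p 0), {p 0}, (p 0, p 1), {p 1}, …,
(p (n - 1), ∞)` of `X`, for `p` strictly increasing: the open intervals get the even indices
`0, 2, …, 2 n`, the point `p i` gets `2 i + 1`. -/
def cell (p : Fin n → X) (a : X) : ℕ := #{i | p i < a} + #{i | p i ≤ a}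

theorem cell_mono (p : Fin n → X) : Monotone (cell p) := fun _ _ hab =>
  add_le_add (Finset.card_le_card (monotone_filter_right _ fun _ _ h => h.trans_le hab))
    (Finset.card_le_card (monotone_filter_right _ fun _ _ h => h.trans hab))

theorem cell_le (p : Fin n → X) (a : X) : cell p a ≤ 2 * n := by
  have h₁ := card_filter_le (univ : Finset (Fin n)) (p · < a)
  have h₂ := card_filter_le (univ : Finset (Fin n)) (p · ≤ a)
  simp only [card_univ, Fintype.card_fin] at h₁ h₂
  unfold cell
  omega

theorem compare_cell {p : Fin n → X} (hp : StrictMono p) (a : X) (i : Fin n) :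
    compare (cell p a) (2 * i + 1) = compare a (p i) := by
  have hlt_le := Finset.card_le_card (monotone_filter_right univ fun j _ (hj : p j < a) => hj.le)
  rcases lt_trichotomy a (p i) with h | rfl | h
  · have hle : #{j | p j ≤ a} ≤ i :=
      (Fin.card_Iio i).le.trans' <| Finset.card_le_card fun j hj => by
        simp only [Finset.mem_filter, Finset.mem_univ, true_and] at hj
        exact Finset.mem_Iio.2 (hp.lt_iff_lt.1 (hj.trans_lt h))
    rw [compare_lt_iff_lt.2 h, compare_lt_iff_lt.2 (by unfold cell; omega)]
  · have h₁ : ({j | p j < p i} : Finset (Fin n)) = Finset.Iio i := by ext; simp [hp.lt_iff_lt]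
    have h₂ : ({j | p j ≤ p i} : Finset (Fin n)) = Finset.Iic i := by ext; simp [hp.le_iff_le]
    rw [cell, h₁, h₂, Fin.card_Iio, Fin.card_Iic, compare_eq_iff_eq.2 rfl, compare_eq_iff_eq]
    omega
  · have hge : i + 1 ≤ #{j | p j < a} :=
      (Fin.card_Iic i).symm.trans_le <| Finset.card_le_card fun j hj => by
        simpa using (hp.monotone (Finset.mem_Iic.1 hj)).trans_lt h
    rw [compare_gt_iff_gt.2 h, compare_gt_iff_gt.2 (by unfold cell; omega)]

theorem cell_eq_of_forall_compare {p : Fin n → X} (hp : StrictMono p) {a : X} {k : ℕ}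
    (hk : k ≤ 2 * n) (h : ∀ i, compare a (p i) = compare k (2 * i + 1)) : cell p a = k :=
  Nat.eq_of_forall_compare_two_mul_add_one (cell_le p a) hk fun i hi =>
    (compare_cell hp a ⟨i, hi⟩).trans (h ⟨i, hi⟩)

/-- The relation between the cells of two points `a < b`. -/
def CellLT (k l : ℕ) : Prop := k < l ∨ (k = l ∧ k % 2 = 0)

theorem cellLT_cell {p : Fin n → X} (hp : StrictMono p) {a b : X} (hab : a < b) :
    CellLT (cell p a) (cell p b) := by
  refine (cell_mono p hab.le).lt_or_eq.imp_right fun h => ⟨h, ?_⟩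
  by_contra hodd
  have hi : cell p a / 2 < n := by have := cell_le p a; omega
  have hcell : 2 * (cell p a / 2) + 1 = cell p a := by omega
  have ha := compare_cell hp a ⟨_, hi⟩
  have hb := compare_cell hp b ⟨_, hi⟩
  rw [hcell, compare_eq_iff_eq.2 rfl, eq_comm, compare_eq_iff_eq] at ha
  rw [hcell, ← h, compare_eq_iff_eq.2 rfl, eq_comm, compare_eq_iff_eq] at hb
  exact hab.ne (ha.trans hb.symm)

theorem cellLT_zero_left (k : ℕ) : CellLT 0 k := by
  unfold CellLT; omega

theorem CellLT.tsub_two {k l : ℕ} (h : CellLT k l) : CellLT (k - 2) (l - 2) := by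
  unfold CellLT at *; omega

theorem CellLT.add_two_iff {k l : ℕ} : CellLT (k + 2) (l + 2) ↔ CellLT k l := by
  unfold CellLT; omega

end Cells

/-- The cell index of a term when `x` lies in cell `k`. -/
def Trm.cellIndex {n : ℕ} (k : ℕ) : Trm n → ℕ
  | .x => k
  | .y i => 2 * i + 1

def QF.evalCell {n : ℕ} : QF n → ℕ → Bool
  | .lt t₁ t₂, k => decide (t₁.cellIndex k < t₂.cellIndex k)
  | .eq t₁ t₂, k => decide (t₁.cellIndex k = t₂.cellIndex k)
  | .not φ, k => !φ.evalCell k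
  | .and φ ψ, k => φ.evalCell k && ψ.evalCell k
  | .or φ ψ, k => φ.evalCell k || ψ.evalCell k

theorem Trm.compare_eval {n : ℕ} {p : Fin n → ℚ} (hp : StrictMono p) (a : ℚ) (t₁ t₂ : Trm n) :
    compare (t₁.eval a p) (t₂.eval a p) =
      compare (t₁.cellIndex (cell p a)) (t₂.cellIndex (cell p a)) := by
  have hodd : StrictMono fun i : Fin n => 2 * (i : ℕ) + 1 := fun i j h => by
    simp only
    omega
  cases t₁ <;> cases t₂ <;> simp only [Trm.eval, Trm.cellIndex]
  · rw [compare_eq_iff_eq.2 rfl, compare_eq_iff_eq.2 rfl]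
  · exact (compare_cell hp a _).symm
  · rw [Std.OrientedOrd.eq_swap, ← compare_cell hp, ← Std.OrientedOrd.eq_swap]
  · rw [← cmp_eq_compare, ← cmp_eq_compare, hp.cmp_map_eq, ← hodd.cmp_map_eq]

theorem QF.sat_iff_evalCell {n : ℕ} {p : Fin n → ℚ} (hp : StrictMono p) (a : ℚ) (φ : QF n) :
    φ.Sat a p ↔ φ.evalCell (cell p a) = true := by
  induction φ with
  | lt t₁ t₂ =>
    rw [QF.Sat, QF.evalCell, decide_eq_true_iff, ← compare_lt_iff_lt, Trm.compare_eval hp,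
      compare_lt_iff_lt]
  | eq t₁ t₂ =>
    rw [QF.Sat, QF.evalCell, decide_eq_true_iff, ← compare_eq_iff_eq, Trm.compare_eval hp,
      compare_eq_iff_eq]
  | not ψ ih => simp [QF.Sat, QF.evalCell, ih]
  | and ψ χ ih₁ ih₂ => simp [QF.Sat, QF.evalCell, ih₁, ih₂]
  | or ψ χ ih₁ ih₂ => simp [QF.Sat, QF.evalCell, ih₁, ih₂]

section Realization

variable {X : Type*} [LinearOrder X]

def IsCellAssignment (n : ℕ) (S : Finset X) (g : X → ℕ) : Prop :=
  (∀ a ∈ S, ∀ b ∈ S, a < b → CellLT (g a) (g b)) ∧ ∀ a ∈ S, g a ≤ 2 * n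

theorem IsCellAssignment.shift {n : ℕ} {S : Finset X} {g : X → ℕ}
    (h : IsCellAssignment (n + 1) S g) (t : X) :
    IsCellAssignment n (insert t S) fun a => if a ≤ t then 0 else g a - 2 := by
  have hS : ∀ a ∈ insert t S, ¬ a ≤ t → a ∈ S := fun a ha hat =>
    (Finset.mem_insert.1 ha).resolve_left fun hat' => hat hat'.le
  refine ⟨fun a ha b hb hab => ?_, fun a ha => ?_⟩ <;> dsimp only
  · by_cases hbt : b ≤ t
    · rw [if_pos (hab.le.trans hbt), if_pos hbt]
      exact cellLT_zero_left 0
    by_cases hat : a ≤ t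
    · rw [if_pos hat]
      exact cellLT_zero_left _
    rw [if_neg hat, if_neg hbt]
    exact (h.1 a (hS a ha hat) b (hS b hb hbt) hab).tsub_two
  · split_ifs with hat
    · omega
    · have := h.2 a (hS a ha hat)
      omega

variable [DenselyOrdered X] [NoMinOrder X] [NoMaxOrder X] [Nonempty X]

/-- A position for the first parameter: it is the point of cell `1` if there is one, and otherwise
separates the points of cell `0` from the others. -/
theorem exists_forall_compare_eq_compare_one {S : Finset X} {g : X → ℕ}
    (h : ∀ a ∈ S, ∀ b ∈ S, a < b → CellLT (g a) (g b)) :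
    ∃ t, ∀ a ∈ S, compare a t = compare (g a) 1 := by
  by_cases hanchor : ∃ t ∈ S, g t = 1
  · obtain ⟨t, ht, hgt⟩ := hanchor
    refine ⟨t, fun a ha => ?_⟩
    rcases lt_trichotomy a t with hat | rfl | hat
    · have := h a ha t ht hat
      rw [hgt] at this
      rw [compare_lt_iff_lt.2 hat, compare_lt_iff_lt.2 (by unfold CellLT at this; omega)]
    · rw [hgt, compare_eq_iff_eq.2 rfl, compare_eq_iff_eq.2 rfl]
    · have := h t ht a ha hat
      rw [hgt] at this
      rw [compare_gt_iff_gt.2 hat, compare_gt_iff_gt.2 (by unfold CellLT at this; omega)]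
  · push Not at hanchor
    obtain ⟨t, hlo, hhi⟩ := Finset.exists_between' {a ∈ S | g a = 0} {a ∈ S | g a ≠ 0} <| by
      simp only [Finset.mem_filter, and_imp]
      intro a ha hga b hb hgb
      by_contra! hba
      obtain hlt | rfl := hba.lt_or_eq
      · have := h b hb a ha hlt
        unfold CellLT at this
        omega
      · exact hgb hga
    refine ⟨t, fun a ha => ?_⟩
    by_cases hga : g a = 0
    · rw [compare_lt_iff_lt.2 (hlo a (by simp [ha, hga])), compare_lt_iff_lt.2 (by omega)]
    · have := hanchor a ha
      rw [compare_gt_iff_gt.2 (hhi a (by simp [ha, hga])), compare_gt_iff_gt.2 (by omega)]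

theorem exists_strictMono_cell_eq (n : ℕ) (S : Finset X) (g : X → ℕ)
    (h : IsCellAssignment n S g) : ∃ p : Fin n → X, StrictMono p ∧ ∀ a ∈ S, cell p a = g a := by
  induction n generalizing S g with
  | zero =>
    refine ⟨Fin.elim0, Subsingleton.strictMono _, fun a ha => ?_⟩
    have := h.2 a ha
    simp only [cell, univ_eq_empty, filter_empty, Finset.card_empty]
    omega
  | succ n ih =>
    obtain ⟨t, ht⟩ := exists_forall_compare_eq_compare_one h.1
    -- `t` joins the set as a point of cell `0`, which forces the remaining parameters above it.
    obtain ⟨p, hp, hpg⟩ := ih _ _ (h.shift t)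
    have htp : ∀ j, t < p j := fun j => by
      have := compare_cell hp t j
      rw [hpg t (Finset.mem_insert_self t S), if_pos le_rfl, compare_lt_iff_lt.2 (by omega),
        eq_comm, compare_lt_iff_lt] at this
      exact this
    have hp' : StrictMono (Fin.cons t p : Fin (n + 1) → X) := Fin.strictMono_cons.2 ⟨htp, hp⟩
    refine ⟨Fin.cons t p, hp', fun a ha => cell_eq_of_forall_compare hp' (h.2 a ha) ?_⟩
    refine Fin.cases (by simpa using ht a ha) fun j => ?_
    have hga : (if a ≤ t then 0 else g a - 2) = g a - 2 := by
      split_ifs with hat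
      · have := compare_le_iff_le.1 ((ht a ha).symm ▸ compare_le_iff_le.2 hat)
        omega
      · rfl
    rw [Fin.cons_succ, ← compare_cell hp, hpg a (Finset.mem_insert_of_mem ha), hga, Fin.val_succ]
    exact compare_eq_compare_of_iff (by omega) (by omega)

end Realization

/-- `Accepts n f w`: the word `w` matches the pattern `f 0* (f 1)? f 2* (f 3)? ⋯ f (2 n)*`. -/
inductive Accepts : ℕ → (ℕ → Bool) → List Bool → Prop
  | nil (n : ℕ) (f : ℕ → Bool) : Accepts n f []
  | rep {n : ℕ} {f : ℕ → Bool} {w : List Bool} : Accepts n f w → Accepts n f (f 0 :: w)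
  | point {n : ℕ} {f : ℕ → Bool} {w : List Bool} :
      Accepts n (fun k => f (k + 2)) w → Accepts (n + 1) f (f 1 :: w)
  | skip {n : ℕ} {f : ℕ → Bool} {w : List Bool} :
      Accepts n (fun k => f (k + 2)) w → Accepts (n + 1) f w

namespace Accepts

variable {n : ℕ} {f : ℕ → Bool} {a : Bool} {w : List Bool}

theorem of_cons (h : Accepts n f (a :: w)) : Accepts n f w := by
  generalize hv : a :: w = v at h
  induction h generalizing w with
  | nil => cases hv
  | rep h => cases hv; exact h
  | point h => cases hv; exact .skip h
  | skip _ ih => exact .skip (ih hv)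

theorem cons_self_iff : Accepts n f (f 0 :: w) ↔ Accepts n f w := ⟨of_cons, rep⟩

theorem not_zero_cons (ha : a ≠ f 0) : ¬ Accepts 0 f (a :: w) := by
  rintro ⟨⟩
  exact ha rfl

theorem succ_cons_iff (ha : a ≠ f 0) :
    Accepts (n + 1) f (a :: w) ↔
      (a = f 1 ∧ Accepts n (fun k => f (k + 2)) w) ∨ Accepts n (fun k => f (k + 2)) (a :: w) := by
  refine ⟨fun h => ?_, ?_⟩
  · cases h with
    | rep => exact absurd rfl ha
    | point h => exact .inl ⟨rfl, h⟩
    | skip h => exact .inr h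
  · rintro (⟨rfl, h⟩ | h)
    exacts [.point h, .skip h]

theorem of_cells {Q : List ℕ}
    (hQ : Q.Pairwise CellLT) (hwQ : List.Forall₂ (fun a k => k ≤ 2 * n ∧ f k = a) w Q) :
    Accepts n f w := by
  induction n generalizing f w Q with
  | zero =>
    induction hwQ with
    | nil => exact .nil 0 f
    | cons hk _ ih =>
      obtain ⟨hk0, rfl⟩ := hk
      obtain rfl : _ = 0 := Nat.le_zero.1 hk0
      exact .rep (ih hQ.of_cons)
  | succ n ihn =>
    induction hwQ with
    | nil => exact .nil _ f
    | @cons a k w Q hk hwQ ih =>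
      obtain ⟨hkn, rfl⟩ := hk
      have hQ2 : ∀ k' ∈ Q, 1 ≤ k → 2 ≤ k' := fun k' hk' hk1 => by
        have := List.rel_of_pairwise_cons hQ hk'
        unfold CellLT at this
        omega
      obtain rfl | rfl | hk2 : k = 0 ∨ k = 1 ∨ 2 ≤ k := by omega
      · exact .rep (ih hQ.of_cons)
      · obtain ⟨Q', rfl⟩ := List.exists_eq_map_add_two fun k' hk' => hQ2 k' hk' le_rfl
        refine .point (ihn (List.pairwise_map.1 hQ.of_cons |>.imp CellLT.add_two_iff.1) ?_)
        exact List.forall₂_map_right_iff.1 hwQ |>.imp fun _ _ h => ⟨by omega, h.2⟩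
      · obtain ⟨Q', hQ'⟩ := List.exists_eq_map_add_two (Q := k :: Q) <| by
          simpa [hk2] using fun k' hk' => hQ2 k' hk' (by omega)
        have hwQ' : List.Forall₂ (fun a k => k ≤ 2 * (n + 1) ∧ f k = a) (f k :: w) (k :: Q) :=
          .cons ⟨hkn, rfl⟩ hwQ
        rw [hQ'] at hQ hwQ'
        refine .skip (ihn (List.pairwise_map.1 hQ |>.imp CellLT.add_two_iff.1) ?_)
        exact List.forall₂_map_right_iff.1 hwQ' |>.imp fun _ _ h => ⟨by omega, h.2⟩

end Accepts

theorem accepts_iff_exists_cells {n : ℕ} {f : ℕ → Bool} {w : List Bool} :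
    Accepts n f w ↔
      ∃ Q : List ℕ, Q.Pairwise CellLT ∧ List.Forall₂ (fun a k => k ≤ 2 * n ∧ f k = a) w Q := by
  refine ⟨fun h => ?_, fun ⟨Q, hQ, hwQ⟩ => Accepts.of_cells hQ hwQ⟩
  induction h with
  | nil => exact ⟨[], .nil, .nil⟩
  | rep _ ih =>
    obtain ⟨Q, hQ, hwQ⟩ := ih
    exact ⟨0 :: Q, hQ.cons fun k _ => cellLT_zero_left k, hwQ.cons ⟨Nat.zero_le _, rfl⟩⟩
  | point _ ih =>
    obtain ⟨Q, hQ, hwQ⟩ := ih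
    refine ⟨1 :: Q.map (· + 2), ?_, .cons ⟨by omega, rfl⟩ ?_⟩
    · refine .cons (fun k hk => ?_) (List.pairwise_map.2 (hQ.imp CellLT.add_two_iff.2))
      obtain ⟨k, -, rfl⟩ := List.mem_map.1 hk
      exact .inl (by omega)
    · exact List.forall₂_map_right_iff.2 (hwQ.imp fun _ _ h => ⟨by omega, h.2⟩)
  | skip _ ih =>
    obtain ⟨Q, hQ, hwQ⟩ := ih
    exact ⟨Q.map (· + 2), List.pairwise_map.2 (hQ.imp CellLT.add_two_iff.2),
      List.forall₂_map_right_iff.2 (hwQ.imp fun _ _ h => ⟨by omega, h.2⟩)⟩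

/-- `(!f 0) :: forbiddenTail n f` is the forbidden subsequence of the pattern of `Accepts n f`: a
word leaves `f 0* (f 1)?` at its first letter `!f 0` and must then match the pattern from cell `2`
on, unless `f 0 = f 1 = f 2` makes that block redundant. -/
def forbiddenTail : ℕ → (ℕ → Bool) → List Bool
  | 0, _ => []
  | n + 1, f =>
    if f 1 = f 0 ∧ f 2 = f 0 then forbiddenTail n (fun k => f (k + 2))
    else (!f 2) :: forbiddenTail n (fun k => f (k + 2))

theorem accepts_not_head_cons_iff {w : List Bool}
    (ih : ∀ n f, Accepts n f w ↔ ¬ ((!f 0) :: forbiddenTail n f) <+ w) (n : ℕ) (f : ℕ → Bool) :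
    Accepts n f ((!f 0) :: w) ↔ ¬ forbiddenTail n f <+ w := by
  induction n generalizing f with
  | zero => simp [Accepts.not_zero_cons, forbiddenTail]
  | succ n ihn =>
    rw [Accepts.succ_cons_iff (by simp), forbiddenTail]
    split_ifs with hf
    · rw [← ihn, hf.1, hf.2]
      simp
    · have hshift := ih n fun k => f (k + 2)
      simp only [zero_add] at hshift
      rw [← hshift]
      by_cases h1 : f 1 = !f 0
      · rw [h1]
        exact ⟨fun h => h.elim And.right Accepts.of_cons, fun h => .inl ⟨rfl, h⟩⟩
      · have h2 : f 2 = !f 0 := by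
          simp only [Bool.eq_not_iff, not_not] at h1 ⊢
          exact fun h2 => hf ⟨h1, h2⟩
        rw [← h2, Accepts.cons_self_iff]
        exact or_iff_right_of_imp And.right

theorem accepts_iff_not_sublist {n : ℕ} {f : ℕ → Bool} {w : List Bool} :
    Accepts n f w ↔ ¬ ((!f 0) :: forbiddenTail n f) <+ w := by
  induction w generalizing n f with
  | nil => simp [Accepts.nil]
  | cons a w ih =>
    by_cases ha : a = f 0
    · subst ha
      simp [Accepts.cons_self_iff, ih, List.sublist_cons_iff]
    · obtain rfl : a = !f 0 := Bool.eq_not_iff.2 ha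
      rw [List.cons_sublist_cons, accepts_not_head_cons_iff @ih]

section Words

variable {X : Type*} [LinearOrder X]

theorem exists_strictMono_cell_iff_accepts [DenselyOrdered X] [NoMinOrder X] [NoMaxOrder X]
    [Nonempty X] {n : ℕ} {f : ℕ → Bool} {L : List X} (hL : L.SortedLT) (w : X → Bool) :
    (∃ p : Fin n → X, StrictMono p ∧ ∀ a ∈ L, f (cell p a) = w a) ↔ Accepts n f (L.map w) := by
  rw [accepts_iff_exists_cells]
  constructor
  · rintro ⟨p, hp, hpw⟩
    refine ⟨L.map (cell p), List.pairwise_map.2 (hL.pairwise.imp (cellLT_cell hp)), ?_⟩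
    rw [List.forall₂_map_left_iff, List.forall₂_map_right_iff, List.forall₂_same]
    exact fun a ha => ⟨cell_le p a, hpw a ha⟩
  · rintro ⟨Q, hQ, hwQ⟩
    obtain ⟨g, rfl⟩ := hL.nodup.exists_map_eq (by simpa using hwQ.length_eq)
    rw [List.forall₂_map_left_iff, List.forall₂_map_right_iff, List.forall₂_same] at hwQ
    rw [List.pairwise_map] at hQ
    obtain ⟨p, hp, hpg⟩ := exists_strictMono_cell_eq n L.toFinset g
      ⟨fun a ha b hb hab => hL.rel_of_lt hQ (List.mem_toFinset.1 ha) (List.mem_toFinset.1 hb) hab,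
        fun a ha => (hwQ a (List.mem_toFinset.1 ha)).1⟩
    exact ⟨p, hp, fun a ha => by rw [hpg a (List.mem_toFinset.2 ha)]; exact (hwQ a ha).2⟩

theorem induces_iff_sublist {d : ℕ} {η : Fin (d + 1) → Bool} {c B : Set X}
    [DecidablePred (· ∈ c)] {L : List X} (hL : L.SortedLT) (hLB : ∀ a, a ∈ L ↔ a ∈ B) :
    Induces c η B ↔ List.ofFn η <+ L.map fun a => decide (a ∈ c) := by
  rw [List.sublist_map_iff]
  constructor
  · rintro ⟨b, hb, hbB, hbc⟩
    refine ⟨List.ofFn b, ?_, ?_⟩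
    · refine List.sublist_of_subperm_of_sortedLE
        (List.subperm_of_subset hb.sortedLT_ofFn.nodup fun a ha => ?_)
        hb.sortedLT_ofFn.sortedLE hL.sortedLE
      obtain ⟨i, rfl⟩ := List.mem_ofFn.1 ha
      exact (hLB _).2 (hbB i)
    · rw [List.map_ofFn]
      congr 1
      funext i
      simp [hbc]
  · rintro ⟨L', hL', hη⟩
    have hlen : L'.length = d + 1 := by simpa using (congrArg List.length hη).symm
    refine ⟨fun i => L'[i.cast hlen.symm], ?_,
      fun i => (hLB _).1 (hL'.subset (List.getElem_mem _)), fun i => ?_⟩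
    · exact (hL.pairwise.sublist hL').sortedLT.strictMono_get.comp (Fin.cast_strictMono hlen.symm)
    · have := List.getElem_of_eq hη (i := i) (by simpa using i.isLt)
      simp only [List.getElem_ofFn, List.getElem_map] at this
      simp [this]

end Words

theorem mem_traceOn_defFam_iff {n : ℕ} {φ : QF n} {B c : Set ℚ} :
    c ∈ traceOn (defFam φ) B ↔
      c ⊆ B ∧ ∃ p : Fin n → ℚ, StrictMono p ∧ ∀ a ∈ B, (a ∈ c ↔ φ.Sat a p) := by
  constructor
  · rintro ⟨_, ⟨p, hp, rfl⟩, rfl⟩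
    exact ⟨Set.inter_subset_right, p, hp, fun a ha => ⟨And.left, fun h => ⟨h, ha⟩⟩⟩
  · rintro ⟨hcB, p, hp, hc⟩
    exact ⟨_, ⟨p, hp, rfl⟩, Set.ext fun a =>
      ⟨fun ha => ⟨(hc a (hcB ha)).1 ha, hcB ha⟩, fun ha => (hc a ha.2).2 ha.1⟩⟩

/-- Every quantifier-free order formula has its increasing-parameter definable
family finitely characterized by some forbidden label. -/
theorem formula_finChar (n : ℕ) (φ : QF n) :
    ∃ (d : ℕ) (η : Fin (d + 1) → Bool), ∀ B : Set ℚ, B.Finite →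
      traceOn (defFam φ) B = {c : Set ℚ | c ⊆ B ∧ ¬ Induces c η B} := by
  classical
  refine ⟨(forbiddenTail n φ.evalCell).length, ((!φ.evalCell 0) :: forbiddenTail n φ.evalCell).get,
    fun B hB => Set.ext fun c => ?_⟩
  obtain ⟨L, hL, hLB⟩ : ∃ L : List ℚ, L.SortedLT ∧ ∀ a, a ∈ L ↔ a ∈ B :=
    ⟨_, hB.toFinset.sortedLT_sort, by simp⟩
  rw [mem_traceOn_defFam_iff, Set.mem_ofPred_eq, induces_iff_sublist hL hLB, List.ofFn_get,
    ← accepts_iff_not_sublist, ← exists_strictMono_cell_iff_accepts hL]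
  refine and_congr_right fun _ => exists_congr fun p => and_congr_right fun hp => ?_
  simp only [hLB]
  refine forall₂_congr fun a _ => ?_
  rw [QF.sat_iff_evalCell hp]
  cases φ.evalCell (cell p a) <;> simp
end
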